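/- For every positive integer c there exists N (depending only on c) such that for all integers n > N, mup(n+ν, c) = mup(n, c) + 1, where ν is the smallest positive integer that does not divide c. -/

import Mathlib

/-- `(𝒜, ℬ)` is a *unique partition* of `A` and `B`: the parts are positive, `𝒜` sums to
`A`, `ℬ` sums to `B`, no element of `𝒜` equals an element of `ℬ`, and the only way to
split the combined multiset `𝒜 + ℬ` into an ordered pair of multisets summing to `A` and
`B` respectively is `(𝒜, ℬ)` itself, or `(ℬ, 𝒜)` in case `A = B`. -/
def UniquePartition (A B : ℕ) (𝒜 ℬ : Multiset ℕ) : Prop :=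
  (∀ x ∈ 𝒜, 0 < x) ∧ (∀ x ∈ ℬ, 0 < x) ∧ 𝒜.sum = A ∧ ℬ.sum = B ∧
  (∀ x ∈ 𝒜, x ∉ ℬ) ∧
  (∀ 𝒜' ℬ' : Multiset ℕ, 𝒜' + ℬ' = 𝒜 + ℬ → 𝒜'.sum = A → ℬ'.sum = B →
    (𝒜' = 𝒜 ∧ ℬ' = ℬ) ∨ (A = B ∧ 𝒜' = ℬ ∧ ℬ' = 𝒜))

/-- `mup(A, B)`: the maximum of `|𝒜| + |ℬ|` over all unique partitions of `A` and `B`. -/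
noncomputable def mup (A B : ℕ) : ℕ :=
  sSup {s | ∃ 𝒜 ℬ : Multiset ℕ, UniquePartition A B 𝒜 ℬ ∧
    s = Multiset.card 𝒜 + Multiset.card ℬ}

/-- The smallest positive integer not dividing `c`. -/
noncomputable def minNonDivisor (c : ℕ) : ℕ := sInf {d | 0 < d ∧ ¬ d ∣ c}

open Multiset

lemma msum_mono {s t : Multiset ℕ} (h : s ≤ t) : s.sum ≤ t.sum := by
  obtain ⟨u, rfl⟩ := _root_.le_iff_exists_add.mp h
  simp

lemma mcard_le_sum {s : Multiset ℕ} (h : ∀ x ∈ s, 0 < x) : Multiset.card s ≤ s.sum := by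
  have := Multiset.card_nsmul_le_sum h
  simpa using this

def Good (A B : ℕ) (𝒜 ℬ : Multiset ℕ) : Prop :=
  (∀ x ∈ 𝒜, 0 < x) ∧ (∀ x ∈ ℬ, 0 < x) ∧ 𝒜.sum = A ∧ ℬ.sum = B ∧
  (∀ S T : Multiset ℕ, S ≤ 𝒜 → T ≤ ℬ → S.sum = T.sum → S = 0 ∧ T = 0)

lemma good_iff {A B : ℕ} (hAB : A ≠ B) (𝒜 ℬ : Multiset ℕ) :
    UniquePartition A B 𝒜 ℬ ↔ Good A B 𝒜 ℬ := by
  constructor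
  · rintro ⟨h1, h2, h3, h4, h5, h6⟩
    refine ⟨h1, h2, h3, h4, ?_⟩
    intro S T hS hT hsum
    have key := h6 ((𝒜 - S) + T) ((ℬ - T) + S) ?_ ?_ ?_
    · rcases key with ⟨hA, hB⟩ | ⟨h, _⟩
      · -- 𝒜 - S + T = 𝒜  ⇒  S = T
        have hST : S = T := by
          have : (𝒜 - S + T) + S = 𝒜 + T := by
            rw [add_right_comm, tsub_add_cancel_of_le hS]
          rw [hA] at this
          exact add_left_cancel this
        rcases Multiset.empty_or_exists_mem S with h0 | ⟨x, hx⟩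
        · refine ⟨h0, ?_⟩; rw [← hST, h0]
        · exact absurd (Multiset.mem_of_le hT (hST ▸ hx)) (h5 x (Multiset.mem_of_le hS hx))
      · exact absurd h hAB
    · ext a
      have c1 := Multiset.le_iff_count.mp hS a
      have c2 := Multiset.le_iff_count.mp hT a
      simp only [Multiset.count_add, Multiset.count_sub]
      omega
    · have h1' : S.sum ≤ 𝒜.sum := msum_mono hS
      have : (𝒜 - S).sum + S.sum = 𝒜.sum := by
        rw [← Multiset.sum_add, tsub_add_cancel_of_le hS]
      rw [Multiset.sum_add]
      omega
    · have h2' : T.sum ≤ ℬ.sum := msum_mono hT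
      have : (ℬ - T).sum + T.sum = ℬ.sum := by
        rw [← Multiset.sum_add, tsub_add_cancel_of_le hT]
      rw [Multiset.sum_add]
      omega
  · rintro ⟨h1, h2, h3, h4, h5⟩
    refine ⟨h1, h2, h3, h4, ?_, ?_⟩
    · intro x hx hxB
      have := h5 {x} {x} (Multiset.singleton_le.mpr hx) (Multiset.singleton_le.mpr hxB) rfl
      simpa using this.1
    · intro 𝒜' ℬ' hadd hA' hB'
      left
      set I := 𝒜 ∩ 𝒜' with hI
      have hIA : I ≤ 𝒜 := Multiset.inter_le_left
      have hIA' : I ≤ 𝒜' := Multiset.inter_le_right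
      have hS : 𝒜 - I ≤ 𝒜 := tsub_le_self
      have hT : 𝒜' - I ≤ ℬ := by
        rw [Multiset.le_iff_count]
        intro a
        have hc := congrArg (fun s => Multiset.count a s) hadd
        simp only [Multiset.count_add] at hc
        rw [Multiset.count_sub, hI, Multiset.count_inter]
        omega
      have hsum : (𝒜 - I).sum = (𝒜' - I).sum := by
        have e1 : (𝒜 - I).sum + I.sum = 𝒜.sum := by
          rw [← Multiset.sum_add, tsub_add_cancel_of_le hIA]
        have e2 : (𝒜' - I).sum + I.sum = 𝒜'.sum := by
          rw [← Multiset.sum_add, tsub_add_cancel_of_le hIA']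
        rw [hA'] at e2; rw [h3] at e1; omega
      obtain ⟨hS0, hT0⟩ := h5 _ _ hS hT hsum
      have hAI : 𝒜 = I := le_antisymm (tsub_eq_zero_iff_le.mp hS0) hIA
      have hA'I : 𝒜' = I := le_antisymm (tsub_eq_zero_iff_le.mp hT0) hIA'
      have hAA' : 𝒜' = 𝒜 := by rw [hAI, hA'I]
      refine ⟨hAA', ?_⟩
      rw [hAA'] at hadd
      exact add_left_cancel hadd
section Part2
variable {c : ℕ}

lemma mup_bdd (A B : ℕ) : BddAbove {s | ∃ 𝒜 ℬ : Multiset ℕ, UniquePartition A B 𝒜 ℬ ∧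
    s = Multiset.card 𝒜 + Multiset.card ℬ} := by
  refine ⟨A + B, ?_⟩
  rintro s ⟨𝒜, ℬ, ⟨h1, h2, h3, h4, -⟩, rfl⟩
  have := mcard_le_sum h1
  have := mcard_le_sum h2
  omega

lemma le_mup {A B : ℕ} {𝒜 ℬ : Multiset ℕ} (h : UniquePartition A B 𝒜 ℬ) :
    Multiset.card 𝒜 + Multiset.card ℬ ≤ mup A B :=
  le_csSup (mup_bdd A B) ⟨𝒜, ℬ, h, rfl⟩

lemma mup_attained {A B : ℕ} (h : ∃ 𝒜 ℬ : Multiset ℕ, UniquePartition A B 𝒜 ℬ) :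
    ∃ 𝒜 ℬ : Multiset ℕ, UniquePartition A B 𝒜 ℬ ∧
      mup A B = Multiset.card 𝒜 + Multiset.card ℬ := by
  have hne : {s | ∃ 𝒜 ℬ : Multiset ℕ, UniquePartition A B 𝒜 ℬ ∧
      s = Multiset.card 𝒜 + Multiset.card ℬ}.Nonempty := by
    obtain ⟨𝒜, ℬ, hU⟩ := h
    exact ⟨_, 𝒜, ℬ, hU, rfl⟩
  obtain ⟨𝒜, ℬ, hU, hs⟩ := Nat.sSup_mem hne (mup_bdd A B)
  exact ⟨𝒜, ℬ, hU, hs⟩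

-- facts about ν
lemma nu_spec (hc : 1 ≤ c) :
    2 ≤ minNonDivisor c ∧ minNonDivisor c ≤ c + 1 ∧ ¬ minNonDivisor c ∣ c ∧
    ∀ d, 0 < d → d < minNonDivisor c → d ∣ c := by
  unfold minNonDivisor
  have hne : (c+1) ∈ {d | 0 < d ∧ ¬ d ∣ c} := by
    refine ⟨Nat.succ_pos c, fun hd => ?_⟩
    exact absurd (Nat.le_of_dvd hc hd) (by omega)
  have hmem := Nat.sInf_mem (⟨c+1, hne⟩ : {d | 0 < d ∧ ¬ d ∣ c}.Nonempty)
  obtain ⟨hpos, hndvd⟩ := hmem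
  refine ⟨?_, Nat.sInf_le hne, hndvd, fun d hd hdlt => ?_⟩
  · have h1 : sInf {d | 0 < d ∧ ¬ d ∣ c} ≠ 1 := fun h => hndvd (h ▸ one_dvd c)
    omega
  · by_contra hdvd
    exact absurd (Nat.sInf_le (show d ∈ {d | 0 < d ∧ ¬ d ∣ c} from ⟨hd, hdvd⟩)) (by omega)

-- the construction giving the lower bound
lemma mup_lower {c ν : ℕ} (hc : 1 ≤ c) (hν2 : 2 ≤ ν) (hνdvd : ¬ ν ∣ c)
    {m : ℕ} (hm : ν * (c + 2) ≤ m) :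
    ∃ q x : ℕ, m = ν * q + x ∧ x ≤ ν * (c + 2) ∧ 2 + q ≤ mup m c := by
  have hνpos : 0 < ν := by omega
  have ha : c + 1 ≤ m / ν := by
    rw [Nat.le_div_iff_mul_le hνpos]
    nlinarith
  have hdm := Nat.div_add_mod m ν
  set q : ℕ := m / ν - (c + 1) with hq
  set x : ℕ := m % ν + ν * (c + 1) with hx
  have hqx : ν * q + ν * (c+1) = ν * (m / ν) := by
    rw [← Nat.mul_add]; congr 1; omega
  have hsum : m = ν * q + x := by omega
  have hxc : c < x := by
    have h22 : 2 * (c+1) ≤ ν * (c+1) := by nlinarith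
    omega
  have hxb : x ≤ ν * (c + 2) := by
    have he : ν * (c+2) = ν * (c+1) + ν := by ring
    have := Nat.mod_lt m hνpos
    omega
  refine ⟨q, x, hsum, hxb, ?_⟩
  have hmc : m ≠ c := by
    have h2 : 2 * (c+2) ≤ ν * (c+2) := by nlinarith
    omega
  have hGood : Good m c (x ::ₘ Multiset.replicate q ν) {c} := by
    refine ⟨?_, ?_, ?_, ?_, ?_⟩
    · intro y hy
      rcases Multiset.mem_cons.mp hy with rfl | hy
      · omega
      · rw [Multiset.eq_of_mem_replicate hy]; omega
    · intro y hy; rw [Multiset.mem_singleton.mp hy]; omega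
    · rw [Multiset.sum_cons, Multiset.sum_replicate, smul_eq_mul]
      have : q * ν = ν * q := Nat.mul_comm q ν
      omega
    · simp
    · intro S T hS hT hsum'
      rcases Multiset.le_singleton.mp hT with rfl | rfl
      · refine ⟨?_, rfl⟩
        rw [Multiset.sum_zero] at hsum'
        rw [Multiset.eq_zero_iff_forall_notMem]
        intro y hy
        have hy0 := (Multiset.sum_eq_zero_iff.mp hsum') y hy
        have hmem := Multiset.mem_of_le hS hy
        rcases Multiset.mem_cons.mp hmem with rfl | h
        · omega
        · have := Multiset.eq_of_mem_replicate h; omega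
      · exfalso
        rw [Multiset.sum_singleton] at hsum'
        by_cases hxS : x ∈ S
        · have : x ≤ S.sum := Multiset.single_le_sum (fun _ _ => Nat.zero_le _) x hxS
          omega
        · have hall : ∀ y ∈ S, y = ν := by
            intro y hy
            have := Multiset.mem_of_le hS hy
            rcases Multiset.mem_cons.mp this with rfl | h
            · exact absurd hy hxS
            · exact Multiset.eq_of_mem_replicate h
          have : ν ∣ S.sum := Multiset.dvd_sum (fun y hy => (hall y hy) ▸ dvd_refl ν)
          rw [hsum'] at this
          exact hνdvd this
  have hUP : UniquePartition m c (x ::ₘ Multiset.replicate q ν) {c} :=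
    (good_iff hmc _ _).mpr hGood
  have hle := le_mup hUP
  simp only [Multiset.card_cons, Multiset.card_replicate, Multiset.card_singleton] at hle
  exact le_trans (by omega : 2 + q ≤ q + 1 + 1) hle

end Part2
section Part3

lemma count_div_le {c m : ℕ} {𝒜 ℬ : Multiset ℕ} (hc : 1 ≤ c)
    (hG : Good m c 𝒜 ℬ) {a : ℕ} (ha : 0 < a) (hd : a ∣ c) : 𝒜.count a ≤ c := by
  obtain ⟨h1, h2, h3, h4, h5⟩ := hG
  by_contra hcount
  push_neg at hcount
  have hac : a ≤ c := Nat.le_of_dvd hc hd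
  have hca : c / a ≤ 𝒜.count a := le_trans (Nat.div_le_self c a) (le_of_lt hcount)
  have hrep : Multiset.replicate (c / a) a ≤ 𝒜 :=
    Multiset.le_count_iff_replicate_le.mp hca
  have hsum : (Multiset.replicate (c / a) a).sum = ℬ.sum := by
    rw [Multiset.sum_replicate, smul_eq_mul, Nat.div_mul_cancel hd, h4]
  obtain ⟨hS0, -⟩ := h5 _ ℬ hrep le_rfl hsum
  have : c / a = 0 := by
    by_contra h0
    have : a ∈ Multiset.replicate (c / a) a := Multiset.mem_replicate.mpr ⟨h0, rfl⟩
    rw [hS0] at this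
    exact Multiset.notMem_zero a this
  have := Nat.div_pos hac ha
  omega

lemma main_count {c ν : ℕ} (hc : 1 ≤ c) (hν2 : 2 ≤ ν) (hνdvd : ¬ ν ∣ c)
    (hνmin : ∀ d, 0 < d → d < ν → d ∣ c)
    {m : ℕ} (hm : ν * (c + (c*c+c) + ν*(c*c+c) + ν*(c+2) + 1) + ν*(c+2) ≤ m)
    {𝒜 ℬ : Multiset ℕ} (hU : UniquePartition m c 𝒜 ℬ)
    (hopt : mup m c = Multiset.card 𝒜 + Multiset.card ℬ) :
    c ≤ 𝒜.count ν := by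
  have hm2 : ν * (c+2) ≤ m := by omega
  have hcm : c < m := by
    have h2 : 2 * (c+2) ≤ ν * (c+2) := by
      apply Nat.mul_le_mul_right _ hν2
    omega
  have hG : Good m c 𝒜 ℬ := (good_iff (by omega) _ _).mp hU
  obtain ⟨h1, h2, h3, h4, h5⟩ := hG
  set t := 𝒜.count ν with ht
  set 𝒜₁ := 𝒜.filter (fun a => ¬ ν = a) with h𝒜₁
  have hsplit : Multiset.replicate t ν + 𝒜₁ = 𝒜 := by
    rw [h𝒜₁, ht, ← Multiset.filter_eq]
    exact Multiset.filter_add_not _ 𝒜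
  set D := 𝒜₁.filter (fun a => a ∣ c) with hD
  set U := 𝒜₁.filter (fun a => ¬ a ∣ c) with hU1
  have hDU : D + U = 𝒜₁ := Multiset.filter_add_not _ 𝒜₁
  have h𝒜₁le : 𝒜₁ ≤ 𝒜 := Multiset.filter_le _ 𝒜
  have hDle : D ≤ 𝒜 := le_trans (Multiset.filter_le _ 𝒜₁) h𝒜₁le
  have hUle : U ≤ 𝒜 := le_trans (Multiset.filter_le _ 𝒜₁) h𝒜₁le
  -- sum and card decompositions
  have hsum : ν * t + (D.sum + U.sum) = m := by
    have e := congrArg Multiset.sum hsplit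
    rw [Multiset.sum_add, Multiset.sum_replicate, smul_eq_mul] at e
    have e2 := congrArg Multiset.sum hDU
    rw [Multiset.sum_add] at e2
    rw [h3] at e
    have : t * ν = ν * t := Nat.mul_comm t ν
    omega
  have hcard : t + (Multiset.card D + Multiset.card U) = Multiset.card 𝒜 := by
    have e := congrArg Multiset.card hsplit
    rw [Multiset.card_add, Multiset.card_replicate] at e
    have e2 := congrArg Multiset.card hDU
    rw [Multiset.card_add] at e2
    omega
  -- bound on card D
  have hcardD : Multiset.card D ≤ c * c := by
    have hDsub : D.toFinset ⊆ Finset.Icc 1 c := by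
      intro a haD
      rw [Multiset.mem_toFinset] at haD
      have ha𝒜 : a ∈ 𝒜 := Multiset.mem_of_le hDle haD
      have hdvd : a ∣ c := (Multiset.mem_filter.mp haD).2
      exact Finset.mem_Icc.mpr ⟨h1 a ha𝒜, Nat.le_of_dvd hc hdvd⟩
    calc Multiset.card D = ∑ a ∈ D.toFinset, D.count a :=
          (Multiset.toFinset_sum_count_eq D).symm
      _ ≤ ∑ a ∈ D.toFinset, c := by
          apply Finset.sum_le_sum
          intro a haD
          rw [Multiset.mem_toFinset] at haD
          have ha𝒜 : a ∈ 𝒜 := Multiset.mem_of_le hDle haD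
          have hdvd : a ∣ c := (Multiset.mem_filter.mp haD).2
          exact le_trans (Multiset.count_le_of_le a hDle)
            (count_div_le hc ⟨h1, h2, h3, h4, h5⟩ (h1 a ha𝒜) hdvd)
      _ = D.toFinset.card * c := by rw [Finset.sum_const, smul_eq_mul]
      _ ≤ c * c := by
          apply Nat.mul_le_mul_right
          calc D.toFinset.card ≤ (Finset.Icc 1 c).card := Finset.card_le_card hDsub
            _ = c := by rw [Nat.card_Icc]; omega
  -- elements of U are ≥ ν + 1
  have hsumU : (ν + 1) * Multiset.card U ≤ U.sum := by
    have hall : ∀ y ∈ U, ν + 1 ≤ y := by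
      intro y hy
      have hy𝒜 : y ∈ 𝒜 := Multiset.mem_of_le hUle hy
      have hyd : ¬ y ∣ c := (Multiset.mem_filter.mp hy).2
      have hyν : ¬ ν = y := (Multiset.mem_filter.mp ((Multiset.mem_filter.mp hy).1)).2
      have hypos : 0 < y := h1 y hy𝒜
      have : ¬ y < ν := fun hlt => hyd (hνmin y hypos hlt)
      omega
    have := Multiset.card_nsmul_le_sum hall
    rw [smul_eq_mul] at this
    calc (ν+1) * Multiset.card U = Multiset.card U * (ν+1) := Nat.mul_comm _ _
      _ ≤ U.sum := this
  have hcardB : Multiset.card ℬ ≤ c := h4 ▸ mcard_le_sum h2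
  -- the lower bound
  obtain ⟨q, x, hqm, hxb, hql⟩ := mup_lower hc hν2 hνdvd hm2
  rw [hopt] at hql
  -- arithmetic
  have e0 : q ≤ t + Multiset.card U + (c*c + c) := by omega
  have e1 : ν * q ≤ ν * t + ν * Multiset.card U + ν * (c*c+c) := by
    calc ν * q ≤ ν * (t + Multiset.card U + (c*c+c)) := Nat.mul_le_mul_left ν e0
      _ = ν * t + ν * Multiset.card U + ν * (c*c+c) := by ring
  have e2 : ν * t + ν * Multiset.card U + Multiset.card U ≤ ν * q + x := by
    have hx1 : (ν+1) * Multiset.card U = ν * Multiset.card U + Multiset.card U := by ring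
    omega
  have e3 : Multiset.card U ≤ ν * (c*c+c) + x := by omega
  have e4 : ν * (c + (c*c+c) + ν*(c*c+c) + ν*(c+2) + 1) ≤ ν * q := by omega
  have e5 : c + (c*c+c) + ν*(c*c+c) + ν*(c+2) + 1 ≤ q :=
    Nat.le_of_mul_le_mul_left e4 (by omega)
  omega

lemma good_add {c ν n : ℕ} (hν2 : 2 ≤ ν) {𝒜 ℬ : Multiset ℕ}
    (hG : Good n c 𝒜 ℬ) (hcount : c ≤ 𝒜.count ν) :
    Good (n + ν) c (ν ::ₘ 𝒜) ℬ := by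
  obtain ⟨h1, h2, h3, h4, h5⟩ := hG
  refine ⟨?_, h2, ?_, h4, ?_⟩
  · intro y hy
    rcases Multiset.mem_cons.mp hy with rfl | hy
    · omega
    · exact h1 y hy
  · rw [Multiset.sum_cons, h3]; omega
  · intro S T hS hT hsum
    have hTs : T.sum ≤ c := h4 ▸ msum_mono hT
    have hSle : S ≤ 𝒜 := by
      rw [Multiset.le_iff_count]
      intro a
      have hSc := Multiset.count_le_of_le a hS
      rw [Multiset.count_cons] at hSc
      by_cases haν : a = ν
      · subst haν
        have hrep : Multiset.replicate (S.count a) a ≤ S :=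
          Multiset.le_count_iff_replicate_le.mp le_rfl
        have hcs : S.count a * a ≤ S.sum := by
          have := msum_mono hrep
          rwa [Multiset.sum_replicate, smul_eq_mul] at this
        have hSsum : S.sum ≤ c := by omega
        have : S.count a ≤ c := by nlinarith
        omega
      · simp only [haν, if_false] at hSc
        omega
    exact h5 S T hSle hT hsum

lemma good_erase {c ν n : ℕ} {𝒜 ℬ : Multiset ℕ}
    (hG : Good (n + ν) c 𝒜 ℬ) (hν : ν ∈ 𝒜) : Good n c (𝒜.erase ν) ℬ := by
  obtain ⟨h1, h2, h3, h4, h5⟩ := hG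
  have hce := Multiset.cons_erase hν
  refine ⟨?_, h2, ?_, h4, ?_⟩
  · intro y hy
    exact h1 y (Multiset.mem_of_le (Multiset.erase_le ν 𝒜) hy)
  · have := congrArg Multiset.sum hce
    rw [Multiset.sum_cons, h3] at this
    omega
  · intro S T hS hT hsum
    exact h5 S T (le_trans hS (Multiset.erase_le ν 𝒜)) hT hsum

end Part3


/-- for every positive integer `c` there is `N` (depending only on `c`)
such that for all `n > N`, `mup(n + ν, c) = mup(n, c) + 1`, where `ν` is the smallest
positive integer not dividing `c`. -/
theorem stmt17 (c : ℕ) (hc : 1 ≤ c) :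
    ∃ N : ℕ, ∀ n : ℕ, N < n →
      mup (n + minNonDivisor c) c = mup n c + 1 := by
  obtain ⟨hν2, hνc1, hνdvd, hνmin⟩ := nu_spec hc
  set ν := minNonDivisor c with hν
  refine ⟨ν * (c + (c*c+c) + ν*(c*c+c) + ν*(c+2) + 1) + ν*(c+2), fun n hn => ?_⟩
  have hcn : c < n := by
    have h2 : 2 * (c+2) ≤ ν * (c+2) := Nat.mul_le_mul_right _ hν2
    omega
  have hm1 : ν * (c + (c*c+c) + ν*(c*c+c) + ν*(c+2) + 1) + ν*(c+2) ≤ n := by omega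
  have hm2 : ν * (c + (c*c+c) + ν*(c*c+c) + ν*(c+2) + 1) + ν*(c+2) ≤ n + ν := by omega
  -- existence of unique partitions
  have hexists : ∀ m : ℕ, c < m → ∃ 𝒜 ℬ : Multiset ℕ, UniquePartition m c 𝒜 ℬ := by
    intro m hm
    refine ⟨{m}, {c}, (good_iff (by omega) _ _).mpr ⟨?_, ?_, ?_, ?_, ?_⟩⟩
    · intro y hy; rw [Multiset.mem_singleton.mp hy]; omega
    · intro y hy; rw [Multiset.mem_singleton.mp hy]; omega
    · exact Multiset.sum_singleton m
    · exact Multiset.sum_singleton c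
    · intro S T hS hT hsum
      rcases Multiset.le_singleton.mp hS with rfl | rfl <;>
        rcases Multiset.le_singleton.mp hT with rfl | rfl <;>
          simp_all <;> omega
  -- optimal partition for n
  obtain ⟨𝒜, ℬ, hU, hopt⟩ := mup_attained (hexists n hcn)
  have hcnt : c ≤ 𝒜.count ν := main_count hc hν2 hνdvd hνmin hm1 hU hopt
  have hGn : Good n c 𝒜 ℬ := (good_iff (by omega) _ _).mp hU
  have hUadd : UniquePartition (n + ν) c (ν ::ₘ 𝒜) ℬ :=
    (good_iff (by omega) _ _).mpr (good_add hν2 hGn hcnt)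
  have hup : mup n c + 1 ≤ mup (n + ν) c := by
    have := le_mup hUadd
    rw [Multiset.card_cons] at this
    omega
  -- optimal partition for n + ν
  obtain ⟨𝒜', ℬ', hU', hopt'⟩ := mup_attained (hexists (n + ν) (by omega))
  have hcnt' : c ≤ 𝒜'.count ν := main_count hc hν2 hνdvd hνmin hm2 hU' hopt'
  have hmem' : ν ∈ 𝒜' := Multiset.count_pos.mp (by omega)
  have hG' : Good (n + ν) c 𝒜' ℬ' := (good_iff (by omega) _ _).mp hU'
  have hUer : UniquePartition n c (𝒜'.erase ν) ℬ' :=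
    (good_iff (by omega) _ _).mpr (good_erase hG' hmem')
  have hdown : mup (n + ν) c ≤ mup n c + 1 := by
    have hle := le_mup hUer
    have hcd : Multiset.card (𝒜'.erase ν) = Multiset.card 𝒜' - 1 := by
      rw [Multiset.card_erase_of_mem hmem']
      rfl
    have hpos : 1 ≤ Multiset.card 𝒜' := by
      rw [← Multiset.count_pos] at hmem'
      have := Multiset.count_le_card ν 𝒜'
      omega
    omega
  omega
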